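/- arXiv:1801.09236 — 2 statements merged into one kernel-verified Lean document; each statement's English description precedes it below -/
import Mathlib

section
/- Let K be a norm ball in ℝ^m with associated norm ‖·‖_K, and let V be a random vector on ℝ^m with density f_V(v) proportional to exp(-a‖v‖_K) for some a > 0. Then the random variable ‖V‖_K is distributed as Gamma(m, a), i.e., it has density g(r) = a^m r^(m-1) exp(-ar)/Γ(m) for r > 0. -/
/-! The gauge is positively homogeneous, so `{x | ‖x‖_K ≤ r} = r • closure K` has Lebesgue
measure `r ^ m * vol (closure K)`: the gauge pushes Lebesgue measure forward to
`m * vol (closure K) * r ^ (m - 1) dr` on `[0, ∞)`. Against `exp (-a r)` this is a constant multiple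
of the `Gamma(m, a)` density, and normalising the density of `V` makes the constant `1`. -/

open MeasureTheory

/-- A set `K ⊆ ℝ^m` is a *norm ball* if it is convex, bounded, absorbing and
symmetric about zero. -/
def IsNormBall {m : ℕ} (K : Set (Fin m → ℝ)) : Prop :=
  Convex ℝ K ∧ Bornology.IsBounded K ∧ Absorbent ℝ K ∧ ∀ u ∈ K, -u ∈ K

open Set Filter Topology Module ProbabilityTheory
open scoped ENNReal Nat Pointwise

theorem MeasureTheory.Measure.ext_of_Iic' {α : Type*} [TopologicalSpace α] {_ : MeasurableSpace α}
    [SecondCountableTopology α] [LinearOrder α] [OrderTopology α] [BorelSpace α] [NoMinOrder α]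
    (μ ν : Measure α) (hμ : ∀ a, μ (Iic a) ≠ ∞) (h : ∀ a, μ (Iic a) = ν (Iic a)) : μ = ν := by
  refine μ.ext_of_Ioc' ν (fun a b _ ↦ ne_top_of_le_ne_top (hμ b) (measure_mono Ioc_subset_Iic_self))
    fun a b hab ↦ ?_
  rw [← Iic_sdiff_Iic, measure_sdiff (Iic_subset_Iic.2 hab.le) nullMeasurableSet_Iic (hμ a),
    measure_sdiff (Iic_subset_Iic.2 hab.le) nullMeasurableSet_Iic (h a ▸ hμ a), h a, h b]

theorem MeasureTheory.Measure.map_withDensity_comp {α β : Type*} [MeasurableSpace α]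
    [MeasurableSpace β] (μ : Measure α) {f : α → β} (hf : Measurable f) {g : β → ℝ≥0∞}
    (hg : Measurable g) : (μ.withDensity (g ∘ f)).map f = (μ.map f).withDensity g := by
  ext s hs
  rw [Measure.map_apply hf hs, withDensity_apply _ (hf hs), withDensity_apply _ hs,
    setLIntegral_map hs hg hf]
  rfl

theorem MeasureTheory.Measure.map_tilted_comp {α β : Type*} [MeasurableSpace α]
    [MeasurableSpace β] (μ : Measure α) {f : α → β} (hf : Measurable f) {g : β → ℝ}
    (hg : Measurable g) : (μ.tilted (g ∘ f)).map f = (μ.map f).tilted g := by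
  have hint : ∫ x, Real.exp ((g ∘ f) x) ∂μ = ∫ y, Real.exp (g y) ∂μ.map f :=
    (integral_map hf.aemeasurable hg.exp.aestronglyMeasurable).symm
  rw [Measure.tilted, Measure.tilted, hint]
  exact map_withDensity_comp μ hf (g := fun y ↦ ENNReal.ofReal (Real.exp (g y) / _)) (by fun_prop)

theorem lintegral_Iic_indicator_Ici_pow {d : ℕ} (hd : 0 < d) (r : ℝ) :
    ∫⁻ x in Iic r, ENNReal.ofReal ((Ici 0).indicator (fun x ↦ d * x ^ (d - 1)) x) =
      ENNReal.ofReal (max r 0 ^ d) := by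
  have hIcc : ∫ x in Icc 0 r, (d * x ^ (d - 1) : ℝ) = max r 0 ^ d := by
    rcases le_or_gt 0 r with hr | hr
    · rw [integral_Icc_eq_integral_Ioc, ← intervalIntegral.integral_of_le hr,
        intervalIntegral.integral_const_mul, integral_pow, Nat.sub_add_cancel hd,
        Nat.cast_pred hd, sub_add_cancel, zero_pow hd.ne', sub_zero, max_eq_left hr]
      field_simp [hd.ne']
    · simp [Icc_eq_empty_of_lt hr, max_eq_right hr.le, zero_pow hd.ne']
  have hind : (fun x ↦ ENNReal.ofReal ((Ici 0).indicator (fun x : ℝ ↦ d * x ^ (d - 1)) x)) =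
      (Ici 0).indicator fun x ↦ ENNReal.ofReal (d * x ^ (d - 1)) :=
    funext fun x ↦ by by_cases hx : 0 ≤ x <;> simp [hx]
  rw [hind, ← hIcc, lintegral_indicator measurableSet_Ici,
    Measure.restrict_restrict measurableSet_Ici, Ici_inter_Iic, ofReal_integral_eq_lintegral_ofReal]
  · exact (by fun_prop : Continuous fun x : ℝ ↦ d * x ^ (d - 1)).integrableOn_Icc
  · filter_upwards [ae_restrict_mem measurableSet_Icc] with x hx
    have : 0 ≤ x := hx.1
    positivity

theorem ProbabilityTheory.integral_gammaPDFReal_eq_one {a r : ℝ} (ha : 0 < a) (hr : 0 < r) :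
    ∫ x, gammaPDFReal a r x = 1 := by
  rw [integral_eq_lintegral_of_nonneg_ae (ae_of_all _ (gammaPDFReal_nonneg ha hr))
    (measurable_gammaPDFReal a r).aestronglyMeasurable]
  change (∫⁻ x, gammaPDF a r x).toReal = 1
  simp [ha, hr]

theorem indicator_Ici_pow_mul_exp_eq_gammaPDFReal {d : ℕ} (hd : 0 < d) {a : ℝ} (ha : 0 < a)
    (r : ℝ) : (Ici 0).indicator (fun x : ℝ ↦ d * x ^ (d - 1)) r * Real.exp (-a * r) =
      d ! / a ^ d * gammaPDFReal d a r := by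
  obtain ⟨n, rfl⟩ : ∃ n, d = n + 1 := ⟨d - 1, by omega⟩
  by_cases hr : 0 ≤ r
  · have hr' : ((n + 1 : ℕ) : ℝ) - 1 = (n : ℕ) := by push_cast; ring
    simp only [indicator_of_mem (mem_Ici.2 hr) (fun x : ℝ ↦ _), gammaPDFReal, if_pos hr, hr',
      Real.rpow_natCast, Nat.factorial_succ, Nat.add_sub_cancel]
    push_cast
    rw [Real.Gamma_nat_eq_factorial]
    field_simp
  · simp [gammaPDFReal, hr]

theorem tilted_withDensity_indicator_Ici_pow_eq_gammaMeasure {d : ℕ} (hd : 0 < d) {a B : ℝ}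
    (ha : 0 < a) (hB : 0 < B) :
    (volume.withDensity fun r ↦ ENNReal.ofReal
      (B * (Ici 0).indicator (fun x : ℝ ↦ d * x ^ (d - 1)) r)).tilted (fun r ↦ -a * r) =
      gammaMeasure d a := by
  set ρ : ℝ → ℝ := (Ici 0).indicator fun x ↦ d * x ^ (d - 1)
  set C := B * (d ! / a ^ d)
  have hdens (r : ℝ) : B * ρ r * Real.exp (-a * r) = C * gammaPDFReal d a r := by
    rw [mul_assoc, indicator_Ici_pow_mul_exp_eq_gammaPDFReal hd ha, mul_assoc]
  have hρ0 (r : ℝ) : 0 ≤ B * ρ r :=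
    mul_nonneg hB.le (indicator_nonneg (fun x (hx : 0 ≤ x) ↦ by positivity) r)
  have hρ : Measurable fun r ↦ ENNReal.ofReal (B * ρ r) := by measurability
  have hnorm :
      ∫ r, Real.exp (-a * r) ∂(volume.withDensity fun r ↦ ENNReal.ofReal (B * ρ r)) = C := by
    rw [integral_withDensity_eq_integral_toReal_smul hρ (ae_of_all _ fun _ ↦ ENNReal.ofReal_lt_top)]
    simp_rw [ENNReal.toReal_ofReal (hρ0 _), smul_eq_mul, hdens]
    rw [integral_const_mul, integral_gammaPDFReal_eq_one (Nat.cast_pos.2 hd) ha, mul_one]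
  have hC : 0 < C := by positivity
  rw [Measure.tilted, hnorm, ← withDensity_mul _ hρ (by fun_prop)]
  congr with r
  rw [Pi.mul_apply, ← ENNReal.ofReal_mul (hρ0 r), ← mul_div_assoc, hdens,
    mul_div_cancel_left₀ _ hC.ne']
  rfl

section Gauge

variable {E : Type*} [NormedAddCommGroup E] [NormedSpace ℝ E] [FiniteDimensional ℝ E] {K : Set E}

theorem Convex.mem_nhds_zero_of_absorbent_of_neg_mem (hc : Convex ℝ K) (ha : Absorbent ℝ K)
    (hneg : ∀ u ∈ K, -u ∈ K) : K ∈ 𝓝 (0 : E) := by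
  have h0 : (0 : E) ∈ K := ha.zero_mem
  have hspan : affineSpan ℝ K = ⊤ := by
    rw [AffineSubspace.affineSpan_eq_top_iff_vectorSpan_eq_top_of_nonempty ℝ _ _ ⟨0, h0⟩,
      Submodule.eq_top_iff']
    intro x
    obtain ⟨c, hx⟩ : ∃ c : ℝ, {x} ⊆ c • K := (ha x).eventually.exists
    obtain ⟨k, hk, rfl⟩ := hx rfl
    simpa using Submodule.smul_mem _ c (vsub_mem_vectorSpan ℝ hk h0)
  obtain ⟨x, hx⟩ := hc.interior_nonempty_iff_affineSpan_eq_top.2 hspan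
  have hmid : (0 : E) ∈ openSegment ℝ x (-x) :=
    ⟨1 / 2, 1 / 2, by norm_num, by norm_num, by norm_num, by simp⟩
  exact mem_interior_iff_mem_nhds.1
    (hc.openSegment_interior_self_subset_interior hx (hneg x (interior_subset hx)) hmid)

variable [MeasurableSpace E] [BorelSpace E] (μ : Measure E) [μ.IsAddHaarMeasure]

theorem addHaar_setOf_gauge_le_of_pos (hc : Convex ℝ K) (h0 : K ∈ 𝓝 0) {r : ℝ} (hr : 0 < r) :
    μ {x | gauge K x ≤ r} = ENNReal.ofReal (r ^ finrank ℝ E) * μ (closure K) := by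
  have hsmul : {x | gauge K x ≤ r} = r • closure K := by
    ext x
    rw [mem_smul_set_iff_inv_smul_mem₀ hr.ne', ← gauge_le_one_iff_mem_closure hc h0,
      gauge_smul_of_nonneg (inv_nonneg.2 hr.le), smul_eq_mul, inv_mul_le_iff₀ hr, mul_one,
      mem_ofPred_eq]
  rw [hsmul, Measure.addHaar_smul, abs_of_pos (pow_pos hr _)]

theorem addHaar_setOf_gauge_le [Nontrivial E] (hc : Convex ℝ K) (h0 : K ∈ 𝓝 0)
    (hb : Bornology.IsBounded K) (r : ℝ) :
    μ {x | gauge K x ≤ r} = ENNReal.ofReal (max r 0 ^ finrank ℝ E) * μ (closure K) := by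
  rcases le_or_gt r 0 with hr | hr
  · have hzero : {x | gauge K x ≤ r} ⊆ {0} := fun x hx ↦
      (gauge_eq_zero (absorbent_nhds_zero h0) (NormedSpace.isVonNBounded_iff ℝ |>.2 hb)).1
        (le_antisymm (hx.trans hr) (gauge_nonneg x))
    rw [measure_mono_null hzero (measure_singleton 0), max_eq_right hr,
      zero_pow finrank_pos.ne', ENNReal.ofReal_zero, zero_mul]
  · rw [max_eq_left hr.le, addHaar_setOf_gauge_le_of_pos μ hc h0 hr]

theorem map_gauge_addHaar [Nontrivial E] (hc : Convex ℝ K) (h0 : K ∈ 𝓝 0)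
    (hb : Bornology.IsBounded K) :
    μ.map (gauge K) = volume.withDensity fun r ↦ ENNReal.ofReal
      (μ.real (closure K) *
        (Ici 0).indicator (fun x : ℝ ↦ finrank ℝ E * x ^ (finrank ℝ E - 1)) r) := by
  have hmeas : Measurable (gauge K) := (continuous_gauge hc h0).measurable
  have hfin : μ (closure K) ≠ ∞ := hb.isCompact_closure.measure_lt_top.ne
  refine Measure.ext_of_Iic' _ _ (fun r ↦ ?_) fun r ↦ ?_ <;>
    rw [Measure.map_apply hmeas measurableSet_Iic]
  · exact (addHaar_setOf_gauge_le μ hc h0 hb r).trans_ne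
      (ENNReal.mul_ne_top ENNReal.ofReal_ne_top hfin)
  · simp_rw [withDensity_apply _ measurableSet_Iic, ENNReal.ofReal_mul measureReal_nonneg]
    rw [lintegral_const_mul' _ _ ENNReal.ofReal_ne_top, lintegral_Iic_indicator_Ici_pow finrank_pos,
      ofReal_measureReal hfin, mul_comm]
    exact addHaar_setOf_gauge_le μ hc h0 hb r

end Gauge

/-- $K$-norm marginal distribution: if `V` has density proportional to
`exp(-a‖v‖_K)` on `ℝ^m`, then `‖V‖_K ~ Gamma(m, a)`. -/
theorem gauge_map_eq_gammaMeasure {m : ℕ} (hm : 0 < m) (K : Set (Fin m → ℝ))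
    (hK : IsNormBall K) (a : ℝ) (ha : 0 < a)
    (μ : Measure (Fin m → ℝ))
    (hμ : μ = volume.withDensity (fun v => ENNReal.ofReal
      (Real.exp (-a * gauge K v) / ∫ w : Fin m → ℝ, Real.exp (-a * gauge K w)))) :
    Measure.map (gauge K) μ = ProbabilityTheory.gammaMeasure m a := by
  obtain ⟨hc, hb, habs, hneg⟩ := hK
  have h0 : K ∈ 𝓝 0 := hc.mem_nhds_zero_of_absorbent_of_neg_mem habs hneg
  have : Nonempty (Fin m) := ⟨⟨0, hm⟩⟩
  have hB : 0 < volume.real (closure K) := ENNReal.toReal_pos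
    (Measure.measure_pos_of_mem_nhds _ (mem_of_superset h0 subset_closure)).ne'
    hb.isCompact_closure.measure_lt_top.ne
  have hμ' : μ = volume.tilted ((fun r ↦ -a * r) ∘ gauge K) := hμ
  rw [hμ', Measure.map_tilted_comp _ (continuous_gauge hc h0).measurable (by fun_prop),
    map_gauge_addHaar volume hc h0 hb, finrank_fin_fun]
  exact tilted_withDensity_indicator_Ici_pow_eq_gammaMeasure hm ha hB
end

section
/- Let V have density f_V(v) = (ε/Δ)^m exp(-(ε/Δ)‖v‖_K)/(m! λ(K)) on ℝ^m, where ε, Δ > 0 and K is a norm ball. Then the differential entropy of V equals H(V) = log((Δ·e/ε)^m · m! · λ(K)). -/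
/-! Write `g` for the gauge `‖·‖_K` and `c = ε / Δ`. The density is `exp (-c g) / Z`, so
`-log f = log Z + c g` and the entropy is `log Z + c 𝔼[g(V)]`. Both `Z` and `𝔼[g(V)]` come from
one Fubini argument: the profiles `exp (-c r)` and `(c r + 1) exp (-c r)` are tails
`∫_r^∞ ρ` of `ρ(s) = c e^{-cs}` and `ρ(s) = c² s e^{-cs}`, and `λ{g < s} = s^m λ(K)`, so
`∫ ∫_{g(v)}^∞ ρ = λ(K) ∫_0^∞ s^m ρ(s) ds`, a Gamma integral. This gives `Z = m! λ(K) / c^m`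
and `c 𝔼[g(V)] = m`, hence `H(V) = log (Z e^m)`. -/

open MeasureTheory

open Set Real Filter Topology Module
open scoped ENNReal Nat Pointwise

theorem integrable_of_lintegral_ofReal_ne_top {α : Type*} [MeasurableSpace α] {μ : Measure α}
    {F : α → ℝ} (hF : 0 ≤ᵐ[μ] F) (hFm : AEStronglyMeasurable F μ)
    (h : ∫⁻ x, ENNReal.ofReal (F x) ∂μ ≠ ∞) : Integrable F μ :=
  ⟨hFm, (hasFiniteIntegral_iff_ofReal hF).2 h.lt_top⟩

theorem lintegral_setLIntegral_Ioi_eq {α : Type*} [MeasurableSpace α] (μ : Measure α) [SFinite μ]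
    {g : α → ℝ} (hg : Measurable g) {ρ : ℝ → ℝ≥0∞} (hρ : Measurable ρ) :
    ∫⁻ x, (∫⁻ s in Ioi (g x), ρ s) ∂μ = ∫⁻ s, μ {x | g x < s} * ρ s := by
  set S : Set (α × ℝ) := {p | g p.1 < p.2}
  have hS : MeasurableSet S := measurableSet_lt (hg.comp measurable_fst) measurable_snd
  calc ∫⁻ x, (∫⁻ s in Ioi (g x), ρ s) ∂μ
      = ∫⁻ x, (∫⁻ s, S.indicator (fun p => ρ p.2) (x, s)) ∂μ := by
        simp_rw [← lintegral_indicator measurableSet_Ioi]; rfl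
    _ = ∫⁻ s, ∫⁻ x, S.indicator (fun p => ρ p.2) (x, s) ∂μ :=
        lintegral_lintegral_swap ((hρ.comp measurable_snd).indicator hS).aemeasurable
    _ = ∫⁻ s, μ {x | g x < s} * ρ s := by
        refine lintegral_congr fun s => ?_
        rw [mul_comm, ← lintegral_indicator_const (measurableSet_lt hg measurable_const)]
        rfl

theorem integral_Ioi_pow_mul_exp_neg_mul {c : ℝ} (hc : 0 < c) (k : ℕ) :
    ∫ s in Ioi 0, s ^ k * exp (-(c * s)) = k ! / c ^ (k + 1) := by
  have h := integral_rpow_mul_exp_neg_mul_Ioi (a := k + 1) (by positivity) hc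
  simp_rw [add_sub_cancel_right, rpow_natCast] at h
  rw [h, Gamma_nat_eq_factorial, ← Nat.cast_add_one, rpow_natCast, one_div, inv_pow]
  ring

theorem integrableOn_Ioi_pow_mul_exp_neg_mul {c : ℝ} (hc : 0 < c) (k : ℕ) :
    IntegrableOn (fun s : ℝ => s ^ k * exp (-(c * s))) (Ioi 0) :=
  .of_integral_ne_zero (by rw [integral_Ioi_pow_mul_exp_neg_mul hc]; positivity)

theorem lintegral_Ioi_pow_mul_exp_neg_mul {c : ℝ} (hc : 0 < c) (k : ℕ) :
    ∫⁻ s in Ioi 0, ENNReal.ofReal (s ^ k * exp (-(c * s))) =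
      ENNReal.ofReal (k ! / c ^ (k + 1)) := by
  rw [← integral_Ioi_pow_mul_exp_neg_mul hc,
    ofReal_integral_eq_lintegral_ofReal (integrableOn_Ioi_pow_mul_exp_neg_mul hc k)]
  filter_upwards [ae_restrict_mem measurableSet_Ioi] with s hs
  exact mul_nonneg (pow_nonneg (le_of_lt hs) _) (exp_pos _).le

theorem lintegral_Ioi_mul_exp_neg_mul {c : ℝ} (hc : 0 < c) (r : ℝ) :
    ∫⁻ s in Ioi r, ENNReal.ofReal (c * exp (-(c * s))) = ENNReal.ofReal (exp (-(c * r))) := by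
  have hint : IntegrableOn (fun s => c * exp (-(c * s))) (Ioi r) := by
    have h := (exp_neg_integrableOn_Ioi r hc).const_mul c
    simp only [neg_mul] at h
    exact h
  rw [← ofReal_integral_eq_lintegral_ofReal hint (ae_of_all _ fun s => by positivity),
    integral_const_mul]
  simp_rw [← neg_mul]
  rw [integral_exp_mul_Ioi (neg_lt_zero.2 hc)]
  field_simp

theorem lintegral_Ioi_sq_mul_mul_exp_neg_mul {c r : ℝ} (hc : 0 < c) (hr : 0 ≤ r) :
    ∫⁻ s in Ioi r, ENNReal.ofReal (c ^ 2 * s * exp (-(c * s))) =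
      ENNReal.ofReal ((c * r + 1) * exp (-(c * r))) := by
  have hint : IntegrableOn (fun s => c ^ 2 * s * exp (-(c * s))) (Ioi r) := by
    have h := ((integrableOn_Ioi_pow_mul_exp_neg_mul hc 1).mono_set
      (Ioi_subset_Ioi hr)).const_mul (c ^ 2)
    simp only [pow_one, ← mul_assoc] at h
    exact h
  have hderiv : ∀ s ∈ Ici r, HasDerivAt (fun s => -((c * s + 1) * exp (-(c * s))))
      (c ^ 2 * s * exp (-(c * s))) s := by
    intro s _
    have h₁ : HasDerivAt (fun s => c * s + 1) c s := by
      simpa using ((hasDerivAt_id s).const_mul c).add_const 1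
    have h₂ : HasDerivAt (fun s => exp (-(c * s))) (exp (-(c * s)) * -c) s := by
      simpa using ((hasDerivAt_id s).const_mul c).fun_neg.exp
    exact (h₁.fun_mul h₂).fun_neg.congr_deriv (by ring)
  have hlim : Tendsto (fun s => -((c * s + 1) * exp (-(c * s)))) atTop (𝓝 0) := by
    have h := ((tendsto_pow_mul_exp_neg_atTop_nhds_zero 1).add tendsto_exp_neg_atTop_nhds_zero).comp
      (tendsto_id.const_mul_atTop hc)
    simpa [add_mul] using h.neg
  rw [← ofReal_integral_eq_lintegral_ofReal hint,
    integral_Ioi_of_hasDerivAt_of_tendsto' hderiv hint hlim, zero_sub, neg_neg]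
  filter_upwards [ae_restrict_mem measurableSet_Ioi] with s hs
  have : 0 ≤ s := hr.trans hs.le
  positivity

section Gauge

variable {E : Type*} [NormedAddCommGroup E] [NormedSpace ℝ E] {K : Set E}

theorem convexOn_gauge (hK : Convex ℝ K) (hK' : Absorbent ℝ K) : ConvexOn ℝ univ (gauge K) := by
  refine ⟨convex_univ, fun x _ y _ a b ha hb _ => ?_⟩
  calc gauge K (a • x + b • y) ≤ gauge K (a • x) + gauge K (b • y) := gauge_add_le hK hK' _ _
    _ = a • gauge K x + b • gauge K y := by
      rw [gauge_smul_of_nonneg ha, gauge_smul_of_nonneg hb]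

variable [FiniteDimensional ℝ E]

theorem Convex.mem_nhds_zero_of_absorbent (hK : Convex ℝ K) (hK' : Absorbent ℝ K) :
    K ∈ 𝓝 (0 : E) := by
  have hcont : Continuous (gauge K) :=
    continuousOn_univ.1 ((convexOn_gauge hK hK').continuousOn isOpen_univ)
  refine mem_of_superset ((isOpen_lt hcont continuous_const).mem_nhds ?_)
    (setOfPred_gauge_lt_one_subset_self hK hK'.zero_mem hK')
  simp

variable [MeasurableSpace E] [BorelSpace E] (μ : Measure E) [μ.IsAddHaarMeasure]

theorem addHaar_setOf_gauge_lt (hK : Convex ℝ K) (hK₀ : K ∈ 𝓝 0) {s : ℝ} (hs : 0 < s) :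
    μ {x | gauge K x < s} = ENNReal.ofReal (s ^ finrank ℝ E) * μ K := by
  have h : {x | gauge K x < s} = s • {x | gauge K x < 1} := by
    ext x
    rw [mem_smul_set_iff_inv_smul_mem₀ hs.ne', mem_ofPred_eq, mem_ofPred_eq,
      gauge_smul_of_nonneg (inv_nonneg.2 hs.le), smul_eq_mul, inv_mul_lt_one₀ hs]
  rw [h, setOfPred_gauge_lt_one_eq_interior hK hK₀, Measure.addHaar_smul_of_nonneg μ hs.le,
    measure_interior_of_null_frontier (hK.addHaar_frontier μ)]

theorem lintegral_setLIntegral_Ioi_gauge (hK : Convex ℝ K) (hK₀ : K ∈ 𝓝 0) {ρ : ℝ → ℝ≥0∞}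
    (hρ : Measurable ρ) :
    ∫⁻ x, (∫⁻ s in Ioi (gauge K x), ρ s) ∂μ =
      μ K * ∫⁻ s in Ioi 0, ENNReal.ofReal (s ^ finrank ℝ E) * ρ s := by
  have h : ∀ s, μ {x | gauge K x < s} * ρ s =
      (Ioi 0).indicator (fun s => μ K * (ENNReal.ofReal (s ^ finrank ℝ E) * ρ s)) s := by
    intro s
    rcases lt_or_ge 0 s with hs | hs
    · rw [indicator_of_mem (show s ∈ Ioi 0 from hs), addHaar_setOf_gauge_lt μ hK hK₀ hs]
      ring
    · have : {x | gauge K x < s} = ∅ :=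
        eq_empty_of_forall_notMem fun x hx => (hx.trans_le hs).not_ge (gauge_nonneg x)
      rw [indicator_of_notMem (show s ∉ Ioi 0 from not_lt.2 hs), this, measure_empty, zero_mul]
  rw [lintegral_setLIntegral_Ioi_eq μ (continuous_gauge hK hK₀).measurable hρ, lintegral_congr h,
    lintegral_indicator measurableSet_Ioi, lintegral_const_mul _ (by fun_prop)]

theorem lintegral_exp_neg_mul_gauge (hK : Convex ℝ K) (hK₀ : K ∈ 𝓝 0) {c : ℝ} (hc : 0 < c) :
    ∫⁻ x, ENNReal.ofReal (exp (-(c * gauge K x))) ∂μ =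
      μ K * ENNReal.ofReal ((finrank ℝ E)! / c ^ finrank ℝ E) := by
  set d := finrank ℝ E
  calc ∫⁻ x, ENNReal.ofReal (exp (-(c * gauge K x))) ∂μ
      = ∫⁻ x, (∫⁻ s in Ioi (gauge K x), ENNReal.ofReal (c * exp (-(c * s)))) ∂μ := by
        simp_rw [lintegral_Ioi_mul_exp_neg_mul hc]
    _ = μ K * ∫⁻ s in Ioi 0, ENNReal.ofReal (s ^ d) * ENNReal.ofReal (c * exp (-(c * s))) :=
        lintegral_setLIntegral_Ioi_gauge μ hK hK₀ (by fun_prop)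
    _ = μ K * ∫⁻ s in Ioi 0, ENNReal.ofReal c * ENNReal.ofReal (s ^ d * exp (-(c * s))) := by
        refine congrArg _ (setLIntegral_congr_fun measurableSet_Ioi fun s hs => ?_)
        rw [← ENNReal.ofReal_mul (pow_nonneg (le_of_lt hs) _), ← ENNReal.ofReal_mul hc.le]
        ring_nf
    _ = μ K * ENNReal.ofReal (d ! / c ^ d) := by
        rw [lintegral_const_mul _ (by fun_prop), lintegral_Ioi_pow_mul_exp_neg_mul hc,
          ← ENNReal.ofReal_mul hc.le, pow_succ]
        field_simp

theorem lintegral_mul_gauge_add_one_mul_exp_neg_mul_gauge (hK : Convex ℝ K) (hK₀ : K ∈ 𝓝 0)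
    {c : ℝ} (hc : 0 < c) :
    ∫⁻ x, ENNReal.ofReal ((c * gauge K x + 1) * exp (-(c * gauge K x))) ∂μ =
      μ K * ENNReal.ofReal ((finrank ℝ E + 1)! / c ^ finrank ℝ E) := by
  set d := finrank ℝ E
  calc ∫⁻ x, ENNReal.ofReal ((c * gauge K x + 1) * exp (-(c * gauge K x))) ∂μ
      = ∫⁻ x, (∫⁻ s in Ioi (gauge K x), ENNReal.ofReal (c ^ 2 * s * exp (-(c * s)))) ∂μ := by
        simp_rw [lintegral_Ioi_sq_mul_mul_exp_neg_mul hc (gauge_nonneg _)]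
    _ = μ K * ∫⁻ s in Ioi 0, ENNReal.ofReal (s ^ d) * ENNReal.ofReal (c ^ 2 * s * exp (-(c * s))) :=
        lintegral_setLIntegral_Ioi_gauge μ hK hK₀ (by fun_prop)
    _ = μ K * ∫⁻ s in Ioi 0, ENNReal.ofReal (c ^ 2) *
          ENNReal.ofReal (s ^ (d + 1) * exp (-(c * s))) := by
        refine congrArg _ (setLIntegral_congr_fun measurableSet_Ioi fun s hs => ?_)
        rw [← ENNReal.ofReal_mul (pow_nonneg (le_of_lt hs) _), ← ENNReal.ofReal_mul (sq_nonneg c)]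
        ring_nf
    _ = μ K * ENNReal.ofReal ((d + 1)! / c ^ d) := by
        rw [lintegral_const_mul _ (by fun_prop), lintegral_Ioi_pow_mul_exp_neg_mul hc,
          ← ENNReal.ofReal_mul (sq_nonneg c)]
        congr 2
        field_simp
        ring

theorem integrable_exp_neg_mul_gauge (hK : Convex ℝ K) (hK₀ : K ∈ 𝓝 0) (hμK : μ K ≠ ∞)
    {c : ℝ} (hc : 0 < c) : Integrable (fun x => exp (-(c * gauge K x))) μ := by
  have := continuous_gauge hK hK₀
  refine integrable_of_lintegral_ofReal_ne_top (ae_of_all _ fun _ => (exp_pos _).le)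
    (by fun_prop) ?_
  rw [lintegral_exp_neg_mul_gauge μ hK hK₀ hc]
  finiteness

theorem integral_exp_neg_mul_gauge (hK : Convex ℝ K) (hK₀ : K ∈ 𝓝 0) {c : ℝ} (hc : 0 < c) :
    ∫ x, exp (-(c * gauge K x)) ∂μ = μ.real K * ((finrank ℝ E)! / c ^ finrank ℝ E) := by
  have := continuous_gauge hK hK₀
  rw [integral_eq_lintegral_of_nonneg_ae (ae_of_all _ fun _ => (exp_pos _).le) (by fun_prop),
    lintegral_exp_neg_mul_gauge μ hK hK₀ hc, ENNReal.toReal_mul,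
    ENNReal.toReal_ofReal (by positivity)]
  rfl

theorem integrable_mul_gauge_add_one_mul_exp_neg_mul_gauge (hK : Convex ℝ K) (hK₀ : K ∈ 𝓝 0)
    (hμK : μ K ≠ ∞) {c : ℝ} (hc : 0 < c) :
    Integrable (fun x => (c * gauge K x + 1) * exp (-(c * gauge K x))) μ := by
  have := continuous_gauge hK hK₀
  refine integrable_of_lintegral_ofReal_ne_top
    (ae_of_all _ fun x => by have := gauge_nonneg (s := K) x; positivity) (by fun_prop) ?_
  rw [lintegral_mul_gauge_add_one_mul_exp_neg_mul_gauge μ hK hK₀ hc]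
  finiteness

theorem integral_mul_gauge_add_one_mul_exp_neg_mul_gauge (hK : Convex ℝ K) (hK₀ : K ∈ 𝓝 0)
    {c : ℝ} (hc : 0 < c) :
    ∫ x, (c * gauge K x + 1) * exp (-(c * gauge K x)) ∂μ =
      μ.real K * ((finrank ℝ E + 1)! / c ^ finrank ℝ E) := by
  have := continuous_gauge hK hK₀
  rw [integral_eq_lintegral_of_nonneg_ae
      (ae_of_all _ fun x => by have := gauge_nonneg (s := K) x; positivity) (by fun_prop),
    lintegral_mul_gauge_add_one_mul_exp_neg_mul_gauge μ hK hK₀ hc, ENNReal.toReal_mul,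
    ENNReal.toReal_ofReal (by positivity)]
  rfl

theorem integral_exp_neg_mul_gauge_div_mul_neg_log (hK : Convex ℝ K) (hK₀ : K ∈ 𝓝 0)
    (hμK : μ K ≠ ∞) {c Z : ℝ} (hc : 0 < c)
    (hZ : Z = μ.real K * ((finrank ℝ E)! / c ^ finrank ℝ E)) :
    ∫ x, exp (-(c * gauge K x)) / Z * -log (exp (-(c * gauge K x)) / Z) ∂μ =
      log (Z * exp (finrank ℝ E)) := by
  have hμK₀ : 0 < μ.real K :=
    ENNReal.toReal_pos (Measure.measure_pos_of_mem_nhds μ hK₀).ne' hμK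
  have hZ₀ : 0 < Z := hZ ▸ by positivity
  -- `c g e^{-cg} = (c g + 1) e^{-cg} - e^{-cg}`
  have hpt : ∀ x, exp (-(c * gauge K x)) / Z * -log (exp (-(c * gauge K x)) / Z) =
      (log Z - 1) / Z * exp (-(c * gauge K x)) +
        Z⁻¹ * ((c * gauge K x + 1) * exp (-(c * gauge K x))) := by
    intro x
    rw [log_div (exp_pos _).ne' hZ₀.ne', log_exp]
    field_simp
    ring
  rw [integral_congr_ae (ae_of_all _ hpt),
    integral_add ((integrable_exp_neg_mul_gauge μ hK hK₀ hμK hc).const_mul _)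
      ((integrable_mul_gauge_add_one_mul_exp_neg_mul_gauge μ hK hK₀ hμK hc).const_mul _),
    integral_const_mul, integral_const_mul, integral_exp_neg_mul_gauge μ hK hK₀ hc,
    integral_mul_gauge_add_one_mul_exp_neg_mul_gauge μ hK hK₀ hc, ← hZ, Nat.factorial_succ,
    log_mul hZ₀.ne' (exp_pos _).ne', log_exp]
  subst hZ
  push_cast
  field_simp
  ring

end Gauge

theorem entropy_of_K_mech_general {m : ℕ} (K : Set (Fin m → ℝ))
    (hK : IsNormBall K) (ε Δ : ℝ) (hε : 0 < ε) (hΔ : 0 < Δ)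
    (f : (Fin m → ℝ) → ℝ)
    (hf : f = fun v => (ε / Δ) ^ m * Real.exp (-(ε / Δ) * gauge K v) /
      ((Nat.factorial m : ℝ) * (volume K).toReal)) :
    (∫ v : Fin m → ℝ, f v * (-Real.log (f v))) =
      Real.log ((Δ * Real.exp 1 / ε) ^ m * (Nat.factorial m : ℝ) * (volume K).toReal) := by
  obtain ⟨hconv, hbdd, habs, -⟩ := hK
  have hK₀ : K ∈ 𝓝 0 := hconv.mem_nhds_zero_of_absorbent habs
  set c := ε / Δ
  set Z := volume.real K * (m ! / c ^ m)
  have hf' : f = fun v => exp (-(c * gauge K v)) / Z := by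
    simp only [hf, Z, c, measureReal_def, neg_mul]
    field_simp
  have hRHS : (Δ * exp 1 / ε) ^ m * m ! * (volume K).toReal = Z * exp m := by
    simp only [Z, c, measureReal_def, ← exp_one_pow, div_pow, mul_pow]
    field_simp
  rw [hf', hRHS]
  simpa only [finrank_fin_fun] using integral_exp_neg_mul_gauge_div_mul_neg_log volume hconv hK₀
    hbdd.measure_lt_top.ne (div_pos hε hΔ) (Z := Z) (by rw [finrank_fin_fun])

/-- entropy of the $K$-norm mechanism: if `V` has density
`f_V(v) = (ε/Δ)^m exp(-(ε/Δ)‖v‖_K)/(m! λ(K))`, then its differential entropy is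
`H(V) = E[-log f_V(V)] = log((Δ e/ε)^m ⋅ m! ⋅ λ(K))`. -/
theorem entropy_of_K_mech {m : ℕ} (hm : 0 < m) (K : Set (Fin m → ℝ))
    (hK : IsNormBall K) (hKmeas : MeasurableSet K) (ε Δ : ℝ) (hε : 0 < ε) (hΔ : 0 < Δ)
    (f : (Fin m → ℝ) → ℝ)
    (hf : f = fun v => (ε / Δ) ^ m * Real.exp (-(ε / Δ) * gauge K v) /
      ((Nat.factorial m : ℝ) * (volume K).toReal)) :
    (∫ v : Fin m → ℝ, f v * (-Real.log (f v))) =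
      Real.log ((Δ * Real.exp 1 / ε) ^ m * (Nat.factorial m : ℝ) * (volume K).toReal) :=
  entropy_of_K_mech_general K hK ε Δ hε hΔ f hf
end
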